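/- In the full dictionary-LASSO setting with the block partition, the free-part error satisfies ‖d‖ = ‖α̂ − α*‖ ≤ W_{d,1}·‖Z⁺(Zh)_{T₀₁}‖ + W_{d,2}·‖(Zh)_{T₀}‖ + ‖(AᵀA)⁻¹Aᵀε‖, where W_{d,1} = ½·σ_min(AᵀA)⁻¹·(ρ̄⁺(p−r, s+l) − ρ̄⁻(p−r, s+l)) and W_{d,2} = (3/2)·σ_min(AᵀA)⁻¹·σ_min(Z)⁻¹·√(s/l)·(ρ̄⁺(p−r, l) − ρ̄⁻(p−r, l)), with ρ̄±(p−r, k) := ρ±_{[A B],Z⁺}(p−r, k) and T₀₁ = T₀ ∪ T₁. -/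

import Mathlib

open scoped BigOperators
open Matrix MeasureTheory ProbabilityTheory

/-- Euclidean norm of a vector in `ℝ^n`. -/
noncomputable def vnorm {n : ℕ} (v : Fin n → ℝ) : ℝ := Real.sqrt (∑ i, v i ^ 2)

/-- ℓ¹ norm. -/
noncomputable def vnorm1 {n : ℕ} (v : Fin n → ℝ) : ℝ := ∑ i, |v i|

/-- ℓ∞ norm. -/
noncomputable def vnormInf {n : ℕ} (v : Fin n → ℝ) : ℝ := ⨆ i, |v i|

/-- Restriction of a vector to an index set: coordinates outside `T` are set to zero. -/
noncomputable def restr {m : ℕ} (T : Finset (Fin m)) (w : Fin m → ℝ) : Fin m → ℝ :=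
  fun i => if i ∈ T then w i else 0

/-- Support of a vector. -/
noncomputable def suppSet {m : ℕ} (w : Fin m → ℝ) : Finset (Fin m) :=
  Finset.univ.filter (fun i => w i ≠ 0)

/-- `𝓗(Y, k)`: all vectors `Y v` with `v` having at most `k` nonzero coordinates. -/
noncomputable def sparseCone {q t : ℕ} (Y : Matrix (Fin q) (Fin t) ℝ) (k : ℕ) :
    Set (Fin q → ℝ) :=
  {w | ∃ v : Fin t → ℝ, (Finset.univ.filter fun i => v i ≠ 0).card ≤ k ∧ w = Y.mulVec v}

/-- `ρ⁺_{Ψ,Y}(k)` (the `l₁ = 0` version). -/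
noncomputable def rhoPlus0 {n q t : ℕ} (Ψ : Matrix (Fin n) (Fin q) ℝ)
    (Y : Matrix (Fin q) (Fin t) ℝ) (k : ℕ) : ℝ :=
  sSup {x | ∃ w ∈ sparseCone Y k, w ≠ 0 ∧ x = vnorm (Ψ.mulVec w) ^ 2 / vnorm w ^ 2}

/-- `ρ⁻_{Ψ,Y}(k)` (the `l₁ = 0` version). -/
noncomputable def rhoMinus0 {n q t : ℕ} (Ψ : Matrix (Fin n) (Fin q) ℝ)
    (Y : Matrix (Fin q) (Fin t) ℝ) (k : ℕ) : ℝ :=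
  sInf {x | ∃ w ∈ sparseCone Y k, w ≠ 0 ∧ x = vnorm (Ψ.mulVec w) ^ 2 / vnorm w ^ 2}

/-- `ρ⁺_{Ψ,Y}(l₁, k)`. -/
noncomputable def rhoPlus {n l₁ q t : ℕ} (Ψ : Matrix (Fin n) (Fin (l₁ + q)) ℝ)
    (Y : Matrix (Fin q) (Fin t) ℝ) (k : ℕ) : ℝ :=
  sSup {x | ∃ (u : Fin l₁ → ℝ) (w : Fin q → ℝ), w ∈ sparseCone Y k ∧ Fin.append u w ≠ 0 ∧
    x = vnorm (Ψ.mulVec (Fin.append u w)) ^ 2 / vnorm (Fin.append u w) ^ 2}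

/-- `ρ⁻_{Ψ,Y}(l₁, k)`. -/
noncomputable def rhoMinus {n l₁ q t : ℕ} (Ψ : Matrix (Fin n) (Fin (l₁ + q)) ℝ)
    (Y : Matrix (Fin q) (Fin t) ℝ) (k : ℕ) : ℝ :=
  sInf {x | ∃ (u : Fin l₁ → ℝ) (w : Fin q → ℝ), w ∈ sparseCone Y k ∧ Fin.append u w ≠ 0 ∧
    x = vnorm (Ψ.mulVec (Fin.append u w)) ^ 2 / vnorm (Fin.append u w) ^ 2}

/-- Column concatenation `[P Q]`. -/
def hcat {n a b : ℕ} (P : Matrix (Fin n) (Fin a) ℝ) (Q : Matrix (Fin n) (Fin b) ℝ) :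
    Matrix (Fin n) (Fin (a + b)) ℝ :=
  Matrix.of fun i => Fin.append (P i) (Q i)

/-- Smallest singular value: `min_{‖v‖ = 1} ‖Z v‖`. -/
noncomputable def sigmaMin {m r : ℕ} (Z : Matrix (Fin m) (Fin r) ℝ) : ℝ :=
  sInf {x | ∃ v : Fin r → ℝ, vnorm v = 1 ∧ x = vnorm (Z.mulVec v)}

/-- Largest singular value: `max_{‖v‖ = 1} ‖Z v‖`. -/
noncomputable def sigmaMax {m r : ℕ} (Z : Matrix (Fin m) (Fin r) ℝ) : ℝ :=
  sSup {x | ∃ v : Fin r → ℝ, vnorm v = 1 ∧ x = vnorm (Z.mulVec v)}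

/-!
Solving the normal equations in `α` gives `d = (AᵀA)⁻¹Aᵀ ε - (AᵀA)⁻¹Aᵀ B h`, so everything rests on
bounding `(AᵀA)⁻¹Aᵀ B h`. Profiling out `α` leaves an analysis LASSO in `β` with design
`X = P_A B`; its basic inequality together with the noise condition yields the cone condition
`‖(Zh)_{T₀ᶜ}‖₁ ≤ 3 ‖(Zh)_{T₀}‖₁`. Write `h = Z⁺ (Zh)_{T₀₁} + ∑_{j ≥ 2} Z⁺ (Zh)_{T_j}`: every piece
`w` lies in a sparse cone `𝓗(Z⁺, k)`, and polarizing the Rayleigh quotients of `[A B]` at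
`(±u, w)` gives `‖AᵀB w‖ ≤ ½ (ρ⁺ - ρ⁻) ‖w‖`. The tail blocks are summed by the sorting argument
`‖(Zh)_{T_j}‖ ≤ ‖(Zh)_{T_{j-1}}‖₁ / √l`, and the cone condition with Cauchy–Schwarz on `T₀` turns
the sum into `3 √(s/l) ‖(Zh)_{T₀}‖`.
-/


section VNorm

variable {n : ℕ}

lemma vnorm_eq_norm_toLp (v : Fin n → ℝ) : vnorm v = ‖WithLp.toLp 2 v‖ := by
  simp [vnorm, EuclideanSpace.norm_eq]

lemma vnorm_nonneg (v : Fin n → ℝ) : 0 ≤ vnorm v := Real.sqrt_nonneg _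

@[simp] lemma vnorm_zero : vnorm (0 : Fin n → ℝ) = 0 := by simp [vnorm]

lemma vnorm_sq (v : Fin n → ℝ) : vnorm v ^ 2 = v ⬝ᵥ v := by
  rw [vnorm, Real.sq_sqrt (by positivity)]
  simp [dotProduct, sq]

lemma vnorm_eq_zero {v : Fin n → ℝ} : vnorm v = 0 ↔ v = 0 := by
  rw [vnorm_eq_norm_toLp, norm_eq_zero, WithLp.toLp_eq_zero]

lemma vnorm_pos {v : Fin n → ℝ} (hv : v ≠ 0) : 0 < vnorm v :=
  (vnorm_nonneg v).lt_of_ne' (vnorm_eq_zero.not.2 hv)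

lemma vnorm_neg (v : Fin n → ℝ) : vnorm (-v) = vnorm v := by
  rw [vnorm_eq_norm_toLp, vnorm_eq_norm_toLp, WithLp.toLp_neg, norm_neg]

lemma vnorm_smul (c : ℝ) (v : Fin n → ℝ) : vnorm (c • v) = |c| * vnorm v := by
  rw [vnorm_eq_norm_toLp, vnorm_eq_norm_toLp, WithLp.toLp_smul, norm_smul, Real.norm_eq_abs]

lemma vnorm_add_le (v w : Fin n → ℝ) : vnorm (v + w) ≤ vnorm v + vnorm w := by
  simpa only [vnorm_eq_norm_toLp, WithLp.toLp_add] using norm_add_le _ _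

lemma vnorm_sub_le (v w : Fin n → ℝ) : vnorm (v - w) ≤ vnorm v + vnorm w := by
  simpa only [vnorm_eq_norm_toLp, WithLp.toLp_sub] using norm_sub_le _ _

lemma vnorm_sum_le {ι : Type*} (s : Finset ι) (f : ι → Fin n → ℝ) :
    vnorm (∑ i ∈ s, f i) ≤ ∑ i ∈ s, vnorm (f i) := by
  simpa only [vnorm_eq_norm_toLp, WithLp.toLp_sum] using norm_sum_le _ _

lemma dotProduct_le_vnorm_mul_vnorm (v w : Fin n → ℝ) : v ⬝ᵥ w ≤ vnorm v * vnorm w := by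
  have h := real_inner_le_norm (WithLp.toLp 2 w) (WithLp.toLp 2 v)
  rwa [EuclideanSpace.inner_eq_star_dotProduct, star_trivial, ← vnorm_eq_norm_toLp,
    ← vnorm_eq_norm_toLp, mul_comm] at h

lemma vnorm_add_sq (v w : Fin n → ℝ) :
    vnorm (v + w) ^ 2 = vnorm v ^ 2 + 2 * (v ⬝ᵥ w) + vnorm w ^ 2 := by
  simp only [vnorm_sq, add_dotProduct, dotProduct_add, dotProduct_comm w v]
  ring

open scoped Matrix.Norms.L2Operator in
lemma vnorm_mulVec_le {k : ℕ} (M : Matrix (Fin k) (Fin n) ℝ) (v : Fin n → ℝ) :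
    vnorm (M *ᵥ v) ≤ ‖M‖ * vnorm v := by
  rw [vnorm_eq_norm_toLp, vnorm_eq_norm_toLp]
  exact M.l2_opNorm_mulVec (WithLp.toLp 2 v)

end VNorm

lemma mulVec_dotProduct_eq_dotProduct_transpose_mulVec {a b : ℕ} (M : Matrix (Fin a) (Fin b) ℝ)
    (u : Fin b → ℝ) (w : Fin a → ℝ) : (M *ᵥ u) ⬝ᵥ w = u ⬝ᵥ (Mᵀ *ᵥ w) := by
  rw [dotProduct_transpose_mulVec, dotProduct_comm]

lemma vnorm_mulVec_le_of_isSymm {n : ℕ} {P : Matrix (Fin n) (Fin n) ℝ} (hsymm : P.IsSymm)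
    (hidem : IsIdempotentElem P) (x : Fin n → ℝ) : vnorm (P *ᵥ x) ≤ vnorm x := by
  have hsq : vnorm (P *ᵥ x) ^ 2 ≤ vnorm x * vnorm (P *ᵥ x) := by
    calc vnorm (P *ᵥ x) ^ 2 = x ⬝ᵥ (P *ᵥ x) := by
          rw [vnorm_sq, mulVec_dotProduct_eq_dotProduct_transpose_mulVec, hsymm.eq,
            mulVec_mulVec, hidem.eq]
      _ ≤ vnorm x * vnorm (P *ᵥ x) := dotProduct_le_vnorm_mul_vnorm _ _
  nlinarith [vnorm_nonneg (P *ᵥ x), vnorm_nonneg x]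

section LeastSquares

variable {n q : ℕ} (A : Matrix (Fin n) (Fin q) ℝ)

lemma isSymm_mul_inv_mul_transpose : (A * (Aᵀ * A)⁻¹ * Aᵀ).IsSymm := by
  simp only [IsSymm, transpose_mul, transpose_transpose, transpose_nonsing_inv, Matrix.mul_assoc]

variable {A}

lemma inv_mul_transpose_mul_self (hA : IsUnit (Aᵀ * A).det) : (Aᵀ * A)⁻¹ * Aᵀ * A = 1 := by
  rw [Matrix.mul_assoc, nonsing_inv_mul _ hA]

lemma isIdempotentElem_mul_inv_mul_transpose (hA : IsUnit (Aᵀ * A).det) :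
    IsIdempotentElem (A * (Aᵀ * A)⁻¹ * Aᵀ) := by
  rw [IsIdempotentElem, show A * (Aᵀ * A)⁻¹ * Aᵀ * (A * (Aᵀ * A)⁻¹ * Aᵀ) =
      A * ((Aᵀ * A)⁻¹ * Aᵀ * A) * (Aᵀ * A)⁻¹ * Aᵀ by simp only [Matrix.mul_assoc],
    inv_mul_transpose_mul_self hA, Matrix.mul_one]

lemma one_sub_mul_inv_mul_transpose_mul (hA : IsUnit (Aᵀ * A).det) :
    (1 - A * (Aᵀ * A)⁻¹ * Aᵀ) * A = 0 := by
  rw [Matrix.sub_mul, Matrix.one_mul, Matrix.mul_assoc, Matrix.mul_assoc, nonsing_inv_mul _ hA,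
    Matrix.mul_one, sub_self]

lemma eq_inv_mul_transpose_mulVec_of_forall_vnorm_le (hA : IsUnit (Aᵀ * A).det)
    {α₀ : Fin q → ℝ} {v : Fin n → ℝ} (hmin : ∀ α, vnorm (A *ᵥ α₀ - v) ≤ vnorm (A *ᵥ α - v)) :
    α₀ = ((Aᵀ * A)⁻¹ * Aᵀ) *ᵥ v := by
  set α₁ := ((Aᵀ * A)⁻¹ * Aᵀ) *ᵥ v
  have horth : Aᵀ *ᵥ (A *ᵥ α₁ - v) = 0 := by
    rw [mulVec_sub, mulVec_mulVec, mulVec_mulVec, ← Matrix.mul_assoc,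
      mul_nonsing_inv _ hA, Matrix.one_mul, sub_self]
  have hpyth : vnorm (A *ᵥ α₀ - v) ^ 2 = vnorm (A *ᵥ (α₀ - α₁)) ^ 2 + vnorm (A *ᵥ α₁ - v) ^ 2 := by
    rw [show A *ᵥ α₀ - v = A *ᵥ (α₀ - α₁) + (A *ᵥ α₁ - v) by rw [mulVec_sub]; abel,
      vnorm_add_sq, mulVec_dotProduct_eq_dotProduct_transpose_mulVec, horth, dotProduct_zero]
    ring
  have hzero : vnorm (A *ᵥ (α₀ - α₁)) = 0 := by
    have := pow_le_pow_left₀ (vnorm_nonneg _) (hmin α₁) 2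
    nlinarith [vnorm_nonneg (A *ᵥ (α₀ - α₁))]
  have hA' := congrArg (((Aᵀ * A)⁻¹ * Aᵀ) *ᵥ ·) (vnorm_eq_zero.1 hzero)
  simpa [mulVec_mulVec, inv_mul_transpose_mul_self hA, sub_eq_zero] using hA'

end LeastSquares

lemma isUnit_det_transpose_mul_self_of_rank_eq {m r : ℕ} {Z : Matrix (Fin m) (Fin r) ℝ}
    (hZ : Z.rank = r) : IsUnit (Zᵀ * Z).det := by
  rw [← isUnit_iff_isUnit_det, ← mulVec_surjective_iff_isUnit, ← coe_mulVecLin,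
    ← LinearMap.range_eq_top]
  apply Submodule.eq_top_of_finrank_eq
  rw [← Matrix.rank, rank_transpose_mul_self, hZ, Module.finrank_fin_fun]

section SigmaMin

variable {m r : ℕ}

lemma sigmaMin_nonneg (Z : Matrix (Fin m) (Fin r) ℝ) : 0 ≤ sigmaMin Z :=
  Real.sInf_nonneg (by rintro x ⟨v, -, rfl⟩; exact vnorm_nonneg _)

lemma sigmaMin_mul_vnorm_le (Z : Matrix (Fin m) (Fin r) ℝ) (v : Fin r → ℝ) :
    sigmaMin Z * vnorm v ≤ vnorm (Z *ᵥ v) := by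
  rcases eq_or_ne v 0 with rfl | hv
  · simp
  have hpos := vnorm_pos hv
  have hunit : vnorm ((vnorm v)⁻¹ • v) = 1 := by
    rw [vnorm_smul, abs_inv, abs_of_pos hpos, inv_mul_cancel₀ hpos.ne']
  have hle : sigmaMin Z ≤ vnorm (Z *ᵥ ((vnorm v)⁻¹ • v)) :=
    csInf_le ⟨0, by rintro x ⟨w, -, rfl⟩; exact vnorm_nonneg _⟩ ⟨_, hunit, rfl⟩
  rw [mulVec_smul, vnorm_smul, abs_inv, abs_of_pos hpos, inv_mul_eq_div] at hle
  rwa [← le_div_iff₀ hpos]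

open scoped Matrix.Norms.L2Operator in
lemma sigmaMin_pos_of_mul_eq_one (hr : 0 < r) {W : Matrix (Fin r) (Fin m) ℝ}
    {Z : Matrix (Fin m) (Fin r) ℝ} (hWZ : W * Z = 1) : 0 < sigmaMin Z := by
  have hC : 0 < ‖W‖ + 1 := by positivity
  refine (inv_pos.2 hC).trans_le (le_csInf ?_ ?_)
  · refine ⟨_, Pi.single ⟨0, hr⟩ 1, ?_, rfl⟩
    simp [vnorm, Pi.single_apply]
  · rintro x ⟨v, hv, rfl⟩
    have h := vnorm_mulVec_le W (Z *ᵥ v)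
    rw [mulVec_mulVec, hWZ, one_mulVec, hv] at h
    rw [inv_le_iff_one_le_mul₀ hC]
    nlinarith [vnorm_nonneg (Z *ᵥ v), norm_nonneg W]

lemma vnorm_le_inv_sigmaMin_mul_of_mul_eq_one {W : Matrix (Fin r) (Fin m) ℝ}
    {Z : Matrix (Fin m) (Fin r) ℝ} (hWZ : W * Z = 1) (v : Fin r → ℝ) :
    vnorm v ≤ (sigmaMin Z)⁻¹ * vnorm (Z *ᵥ v) := by
  rcases Nat.eq_zero_or_pos r with rfl | hr
  · rw [Subsingleton.elim v 0, vnorm_zero]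
    exact mul_nonneg (inv_nonneg.2 (sigmaMin_nonneg Z)) (vnorm_nonneg _)
  rw [le_inv_mul_iff₀ (sigmaMin_pos_of_mul_eq_one hr hWZ)]
  exact sigmaMin_mul_vnorm_le Z v

lemma vnorm_inv_mulVec_le {G : Matrix (Fin r) (Fin r) ℝ} (hG : IsUnit G.det) (z : Fin r → ℝ) :
    vnorm (G⁻¹ *ᵥ z) ≤ (sigmaMin G)⁻¹ * vnorm z := by
  simpa [mulVec_mulVec, mul_nonsing_inv _ hG] using
    vnorm_le_inv_sigmaMin_mul_of_mul_eq_one (nonsing_inv_mul _ hG) (G⁻¹ *ᵥ z)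

lemma vnorm_pinv_mulVec_le {Z : Matrix (Fin m) (Fin r) ℝ} (hZ : IsUnit (Zᵀ * Z).det)
    (x : Fin m → ℝ) : vnorm (((Zᵀ * Z)⁻¹ * Zᵀ) *ᵥ x) ≤ (sigmaMin Z)⁻¹ * vnorm x := by
  refine (vnorm_le_inv_sigmaMin_mul_of_mul_eq_one (inv_mul_transpose_mul_self hZ) _).trans ?_
  gcongr
  · exact inv_nonneg.2 (sigmaMin_nonneg Z)
  rw [mulVec_mulVec, ← Matrix.mul_assoc]
  exact vnorm_mulVec_le_of_isSymm (isSymm_mul_inv_mul_transpose Z)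
    (isIdempotentElem_mul_inv_mul_transpose hZ) x

end SigmaMin

lemma hcat_mulVec_append {n a b : ℕ} (P : Matrix (Fin n) (Fin a) ℝ) (Q : Matrix (Fin n) (Fin b) ℝ)
    (u : Fin a → ℝ) (w : Fin b → ℝ) : hcat P Q *ᵥ Fin.append u w = P *ᵥ u + Q *ᵥ w := by
  ext i
  simp [hcat, mulVec, dotProduct, Fin.sum_univ_add]

lemma vnorm_append_sq {a b : ℕ} (u : Fin a → ℝ) (w : Fin b → ℝ) :
    vnorm (Fin.append u w) ^ 2 = vnorm u ^ 2 + vnorm w ^ 2 := by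
  simp [vnorm_sq, dotProduct, Fin.sum_univ_add]

section Rayleigh

variable {n l₁ q t : ℕ} (Ψ : Matrix (Fin n) (Fin (l₁ + q)) ℝ) (Y : Matrix (Fin q) (Fin t) ℝ)
  (k : ℕ)

/-- The Rayleigh quotients whose supremum and infimum are `rhoPlus` and `rhoMinus`. -/
def rayleighSet : Set ℝ :=
  {x | ∃ (u : Fin l₁ → ℝ) (w : Fin q → ℝ), w ∈ sparseCone Y k ∧ Fin.append u w ≠ 0 ∧
    x = vnorm (Ψ *ᵥ Fin.append u w) ^ 2 / vnorm (Fin.append u w) ^ 2}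

lemma rayleighSet_bddBelow : BddBelow (rayleighSet Ψ Y k) :=
  ⟨0, by rintro x ⟨u, w, -, -, rfl⟩; positivity⟩

open scoped Matrix.Norms.L2Operator in
lemma rayleighSet_bddAbove : BddAbove (rayleighSet Ψ Y k) := by
  refine ⟨‖Ψ‖ ^ 2, ?_⟩
  rintro x ⟨u, w, -, hne, rfl⟩
  have hpos := vnorm_pos hne
  rw [div_le_iff₀ (by positivity), ← mul_pow]
  exact pow_le_pow_left₀ (vnorm_nonneg _) (vnorm_mulVec_le Ψ _) 2

lemma rhoMinus_le_rhoPlus : rhoMinus Ψ Y k ≤ rhoPlus Ψ Y k := by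
  change sInf (rayleighSet Ψ Y k) ≤ sSup (rayleighSet Ψ Y k)
  rcases (rayleighSet Ψ Y k).eq_empty_or_nonempty with h | h
  · -- an empty sparse cone gives `rhoMinus = rhoPlus = 0`, by the convention `sSup ∅ = sInf ∅ = 0`
    simp [h]
  · exact csInf_le_csSup h (rayleighSet_bddBelow Ψ Y k) (rayleighSet_bddAbove Ψ Y k)

variable {Ψ Y k}

lemma rhoMinus_le_rayleigh_le_rhoPlus (u : Fin l₁ → ℝ) {w : Fin q → ℝ} (hw : w ∈ sparseCone Y k)
    (hw0 : w ≠ 0) :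
    rhoMinus Ψ Y k ≤ vnorm (Ψ *ᵥ Fin.append u w) ^ 2 / vnorm (Fin.append u w) ^ 2 ∧
      vnorm (Ψ *ᵥ Fin.append u w) ^ 2 / vnorm (Fin.append u w) ^ 2 ≤ rhoPlus Ψ Y k := by
  have hne : Fin.append u w ≠ 0 := fun h ↦ hw0 <| by
    ext i; simpa using congrFun h (Fin.natAdd l₁ i)
  have hmem : _ ∈ rayleighSet Ψ Y k := ⟨u, w, hw, hne, rfl⟩
  exact ⟨csInf_le (rayleighSet_bddBelow Ψ Y k) hmem, le_csSup (rayleighSet_bddAbove Ψ Y k) hmem⟩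

end Rayleigh

section Polarization

variable {n a r m : ℕ} {A : Matrix (Fin n) (Fin a) ℝ} {B : Matrix (Fin n) (Fin r) ℝ}
  {Y : Matrix (Fin r) (Fin m) ℝ} {k : ℕ}

/-- Comparing the Rayleigh quotients of `(u, w)` and `(-u, w)` isolates the cross term
`⟨A u, B w⟩ = ⟨u, Aᵀ B w⟩`. -/
lemma four_mul_dotProduct_div_le_rhoPlus_sub_rhoMinus (u : Fin a → ℝ) {w : Fin r → ℝ}
    (hw : w ∈ sparseCone Y k) (hw0 : w ≠ 0) :
    4 * (u ⬝ᵥ (Aᵀ *ᵥ (B *ᵥ w))) / (vnorm u ^ 2 + vnorm w ^ 2) ≤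
      rhoPlus (hcat A B) Y k - rhoMinus (hcat A B) Y k := by
  have hplus := (rhoMinus_le_rayleigh_le_rhoPlus (Ψ := hcat A B) u hw hw0).2
  have hminus := (rhoMinus_le_rayleigh_le_rhoPlus (Ψ := hcat A B) (-u) hw hw0).1
  rw [hcat_mulVec_append, vnorm_append_sq, vnorm_add_sq,
    mulVec_dotProduct_eq_dotProduct_transpose_mulVec] at hplus hminus
  rw [vnorm_neg, mulVec_neg, vnorm_neg, neg_dotProduct] at hminus
  have hD : 0 < vnorm u ^ 2 + vnorm w ^ 2 := by
    have := vnorm_pos hw0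
    positivity
  calc 4 * (u ⬝ᵥ (Aᵀ *ᵥ (B *ᵥ w))) / (vnorm u ^ 2 + vnorm w ^ 2)
      = (vnorm (A *ᵥ u) ^ 2 + 2 * (u ⬝ᵥ (Aᵀ *ᵥ (B *ᵥ w))) + vnorm (B *ᵥ w) ^ 2) /
          (vnorm u ^ 2 + vnorm w ^ 2) -
        (vnorm (A *ᵥ u) ^ 2 + 2 * -(u ⬝ᵥ (Aᵀ *ᵥ (B *ᵥ w))) + vnorm (B *ᵥ w) ^ 2) /
          (vnorm u ^ 2 + vnorm w ^ 2) := by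
        field_simp
        ring
    _ ≤ _ := sub_le_sub hplus hminus

lemma vnorm_transpose_mulVec_le_rho {w : Fin r → ℝ} (hw : w ∈ sparseCone Y k) :
    vnorm (Aᵀ *ᵥ (B *ᵥ w)) ≤
      (1 / 2) * (rhoPlus (hcat A B) Y k - rhoMinus (hcat A B) Y k) * vnorm w := by
  have hgap := sub_nonneg.2 (rhoMinus_le_rhoPlus (hcat A B) Y k)
  set g := Aᵀ *ᵥ (B *ᵥ w)
  rcases eq_or_ne w 0 with rfl | hw0
  · simp [g]
  rcases eq_or_ne g 0 with hg0 | hg0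
  · rw [hg0, vnorm_zero]
    exact mul_nonneg (by linarith) (vnorm_nonneg w)
  have hwpos := vnorm_pos hw0
  have hgpos := vnorm_pos hg0
  -- Test against `u = (‖w‖ / ‖g‖) • g`, which has the same norm as `w`.
  have h := four_mul_dotProduct_div_le_rhoPlus_sub_rhoMinus (A := A) (B := B)
    ((vnorm w / vnorm g) • g) hw hw0
  rw [smul_dotProduct, smul_eq_mul, ← vnorm_sq, vnorm_smul, abs_of_pos (by positivity),
    div_mul_cancel₀ _ hgpos.ne'] at h
  rw [div_le_iff₀ (by positivity)] at h
  have : vnorm w / vnorm g * vnorm g ^ 2 = vnorm w * vnorm g := by field_simp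
  nlinarith

section Restriction

variable {m : ℕ}

lemma vnorm1_restr (T : Finset (Fin m)) (v : Fin m → ℝ) :
    vnorm1 (restr T v) = ∑ i ∈ T, |v i| := by
  simp [vnorm1, restr, apply_ite, Finset.sum_ite_mem]

lemma vnorm_restr_sq (T : Finset (Fin m)) (v : Fin m → ℝ) :
    vnorm (restr T v) ^ 2 = ∑ i ∈ T, v i ^ 2 := by
  rw [vnorm_sq, dotProduct]
  simp [restr, Finset.sum_ite_mem, sq]

lemma vnorm1_eq_restr_add_restr_compl (T : Finset (Fin m)) (v : Fin m → ℝ) :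
    vnorm1 v = vnorm1 (restr T v) + vnorm1 (restr Tᶜ v) := by
  rw [vnorm1_restr, vnorm1_restr, Finset.sum_add_sum_compl, vnorm1]

lemma vnorm1_restr_le_sqrt_card_mul_vnorm (T : Finset (Fin m)) (v : Fin m → ℝ) :
    vnorm1 (restr T v) ≤ Real.sqrt T.card * vnorm (restr T v) := by
  rw [← Real.sqrt_sq (vnorm_nonneg _), ← Real.sqrt_mul (Nat.cast_nonneg _)]
  apply Real.le_sqrt_of_sq_le
  rw [vnorm1_restr, vnorm_restr_sq]
  simpa only [sq_abs] using sq_sum_le_card_mul_sum_sq (s := T) (f := fun i ↦ |v i|)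

lemma vnorm1_sub_add_le_vnorm1_add (a q : Fin m → ℝ) :
    vnorm1 a - vnorm1 (restr (suppSet a) q) + vnorm1 (restr (suppSet a)ᶜ q) ≤ vnorm1 (a + q) := by
  set T := suppSet a
  have hoff : ∀ i ∈ Tᶜ, a i = 0 := by simp [T, suppSet]
  have ha : vnorm1 a = ∑ i ∈ T, |a i| := by
    rw [vnorm1_eq_restr_add_restr_compl T, vnorm1_restr, vnorm1_restr,
      Finset.sum_eq_zero (s := Tᶜ) fun i hi ↦ by simp [hoff i hi], add_zero]
  have hon : ∑ i ∈ T, |a i| - ∑ i ∈ T, |q i| ≤ ∑ i ∈ T, |(a + q) i| := by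
    rw [← Finset.sum_sub_distrib]
    exact Finset.sum_le_sum fun i _ ↦ by simpa using abs_sub_abs_le_abs_sub (a i) (-q i)
  have hoff' : ∑ i ∈ Tᶜ, |(a + q) i| = ∑ i ∈ Tᶜ, |q i| :=
    Finset.sum_congr rfl fun i hi ↦ by simp [hoff i hi]
  rw [ha, vnorm1_eq_restr_add_restr_compl T (a + q), vnorm1_restr, vnorm1_restr, vnorm1_restr,
    vnorm1_restr, hoff']
  linarith

lemma mulVec_restr_mem_sparseCone {r : ℕ} (Y : Matrix (Fin r) (Fin m) ℝ) {T : Finset (Fin m)}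
    {k : ℕ} (hT : T.card ≤ k) (v : Fin m → ℝ) : Y *ᵥ restr T v ∈ sparseCone Y k := by
  refine ⟨restr T v, le_trans (Finset.card_le_card fun i hi ↦ ?_) hT, rfl⟩
  by_contra hiT
  simp [restr, hiT] at hi

end Restriction

lemma abs_dotProduct_le_vnorm1_mul_vnormInf {m : ℕ} (a b : Fin m → ℝ) :
    |a ⬝ᵥ b| ≤ vnorm1 a * vnormInf b := by
  rw [vnorm1, Finset.sum_mul]
  refine (Finset.abs_sum_le_sum_abs _ _).trans (Finset.sum_le_sum fun i _ ↦ ?_)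
  rw [abs_mul]
  exact mul_le_mul_of_nonneg_left
    (le_ciSup (Set.finite_range fun i ↦ |b i|).bddAbove i) (abs_nonneg _)

lemma vnormInf_neg {m : ℕ} (b : Fin m → ℝ) : vnormInf (-b) = vnormInf b := by
  simp [vnormInf]

/-- The cone condition of the analysis LASSO. -/
theorem vnorm1_restr_compl_le_three_mul {n r m : ℕ} {X : Matrix (Fin n) (Fin r) ℝ}
    {y : Fin n → ℝ} {Z : Matrix (Fin m) (Fin r) ℝ} {Zp : Matrix (Fin r) (Fin m) ℝ}
    (hZpZ : Zp * Z = 1) {lam : ℝ} (hlam : 0 < lam) {β' β : Fin r → ℝ}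
    (hbasic : (1 / 2) * vnorm (X *ᵥ β' - y) ^ 2 + lam * vnorm1 (Z *ᵥ β') ≤
      (1 / 2) * vnorm (X *ᵥ β - y) ^ 2 + lam * vnorm1 (Z *ᵥ β))
    (hnoise : vnormInf (Zpᵀ *ᵥ (Xᵀ *ᵥ (X *ᵥ β - y))) ≤ lam / 2) :
    vnorm1 (restr (suppSet (Z *ᵥ β))ᶜ (Z *ᵥ (β' - β))) ≤
      3 * vnorm1 (restr (suppSet (Z *ᵥ β)) (Z *ᵥ (β' - β))) := by
  set q := Z *ᵥ (β' - β)
  set e := X *ᵥ β - y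
  have hquad : vnorm (X *ᵥ β' - y) ^ 2 =
      vnorm (X *ᵥ (β' - β)) ^ 2 + 2 * (X *ᵥ (β' - β)) ⬝ᵥ e + vnorm e ^ 2 := by
    rw [← vnorm_add_sq, mulVec_sub, show e = X *ᵥ β - y from rfl, sub_add_sub_cancel]
  have hcross : -(vnorm1 q * (lam / 2)) ≤ (X *ᵥ (β' - β)) ⬝ᵥ e := by
    have hpinv : β' - β = Zp *ᵥ q := by rw [mulVec_mulVec, hZpZ, one_mulVec]
    rw [mulVec_dotProduct_eq_dotProduct_transpose_mulVec, hpinv,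
      mulVec_dotProduct_eq_dotProduct_transpose_mulVec]
    have h := abs_dotProduct_le_vnorm1_mul_vnormInf q (Zpᵀ *ᵥ (Xᵀ *ᵥ e))
    have : vnorm1 q * vnormInf (Zpᵀ *ᵥ (Xᵀ *ᵥ e)) ≤ vnorm1 q * (lam / 2) :=
      mul_le_mul_of_nonneg_left hnoise (Finset.sum_nonneg fun i _ ↦ abs_nonneg _)
    linarith [neg_abs_le (q ⬝ᵥ (Zpᵀ *ᵥ (Xᵀ *ᵥ e)))]
  have hpen := vnorm1_sub_add_le_vnorm1_add (Z *ᵥ β) q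
  rw [← mulVec_add, add_sub_cancel] at hpen
  have hsplit := vnorm1_eq_restr_add_restr_compl (suppSet (Z *ᵥ β)) q
  nlinarith [vnorm_nonneg (X *ᵥ (β' - β))]

section Blocks

variable {m : ℕ}

lemma restr_eq_indicator (T : Finset (Fin m)) (v : Fin m → ℝ) :
    restr T v = (T : Set (Fin m)).indicator v := by
  ext i
  simp [restr, Set.indicator_apply]

lemma restr_add_restr_compl (T : Finset (Fin m)) (v : Fin m → ℝ) :
    restr T v + restr Tᶜ v = v := by
  rw [restr_eq_indicator, restr_eq_indicator, Finset.coe_compl, Set.indicator_self_add_compl]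

lemma restr_union {S S' : Finset (Fin m)} (h : Disjoint S S') (v : Fin m → ℝ) :
    restr (S ∪ S') v = restr S v + restr S' v := by
  simp only [restr_eq_indicator, Finset.coe_union]
  exact Set.indicator_union_of_disjoint (Finset.disjoint_coe.2 h) v

lemma sum_restr_eq_restr_biUnion {ι : Type*} (s : Finset ι) {T : ι → Finset (Fin m)}
    (hT : (s : Set ι).PairwiseDisjoint T) (v : Fin m → ℝ) :
    ∑ j ∈ s, restr (T j) v = restr (s.biUnion T) v := by
  classical
  ext i
  simp only [Finset.sum_apply, restr_eq_indicator, Finset.coe_biUnion, Finset.set_biUnion_coe]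
  rw [Finset.indicator_biUnion_apply]
  exact fun a ha b hb hab ↦ Finset.disjoint_coe.2 (hT ha hb hab)

lemma eq_restr_union_add_sum_restr {T₀ : Finset (Fin m)} {T : ℕ → Finset (Fin m)} {J : ℕ}
    (hJ : 1 ≤ J) (hUnion : (Finset.Icc 1 J).biUnion T = T₀ᶜ)
    (hDisj : ∀ i ∈ Finset.Icc 1 J, ∀ j ∈ Finset.Icc 1 J, i ≠ j → Disjoint (T i) (T j))
    (v : Fin m → ℝ) :
    v = restr (T₀ ∪ T 1) v + ∑ j ∈ Finset.Icc 2 J, restr (T j) v := by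
  have hT1 : Disjoint T₀ (T 1) := by
    rw [Finset.disjoint_left]
    intro i hi h1
    have : i ∈ T₀ᶜ := hUnion ▸ Finset.mem_biUnion.2 ⟨1, Finset.mem_Icc.2 ⟨le_rfl, hJ⟩, h1⟩
    exact Finset.mem_compl.1 this hi
  have hIcc : Finset.Icc 1 J = insert 1 (Finset.Icc 2 J) := by
    ext j; simp only [Finset.mem_Icc, Finset.mem_insert]; omega
  have hcompl := sum_restr_eq_restr_biUnion (Finset.Icc 1 J) hDisj v
  rw [hUnion, hIcc, Finset.sum_insert (by simp)] at hcompl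
  rw [restr_union hT1, add_assoc, hcompl, restr_add_restr_compl]

lemma vnorm_restr_le_vnorm1_restr_div_sqrt {l : ℕ} (hl : 0 < l) {S S' : Finset (Fin m)}
    (hS : S.card = l) (hS' : S'.card ≤ l) {v : Fin m → ℝ}
    (hle : ∀ a ∈ S', ∀ b ∈ S, |v a| ≤ |v b|) :
    vnorm (restr S' v) ≤ vnorm1 (restr S v) / Real.sqrt l := by
  set σ := vnorm1 (restr S v) with hσ_def
  have hlpos : (0 : ℝ) < l := Nat.cast_pos.2 hl
  have havg : ∀ a ∈ S', |v a| ≤ σ / l := by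
    intro a ha
    rw [le_div_iff₀ hlpos, hσ_def, vnorm1_restr, mul_comm, ← hS, ← nsmul_eq_mul, ← Finset.sum_const]
    exact Finset.sum_le_sum fun b hb ↦ hle a ha b hb
  have hsq : vnorm (restr S' v) ^ 2 ≤ (σ / Real.sqrt l) ^ 2 := by
    rw [vnorm_restr_sq, div_pow, Real.sq_sqrt hlpos.le]
    calc ∑ a ∈ S', v a ^ 2 ≤ ∑ _a ∈ S', (σ / l) ^ 2 :=
          Finset.sum_le_sum fun a ha ↦ by
            simpa only [sq_abs] using pow_le_pow_left₀ (abs_nonneg _) (havg a ha) 2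
      _ ≤ l * (σ / l) ^ 2 := by
          rw [Finset.sum_const, nsmul_eq_mul]
          gcongr
      _ = σ ^ 2 / l := by field_simp
  have hσ : 0 ≤ σ := by rw [hσ_def, vnorm1_restr]; positivity
  exact pow_le_pow_iff_left₀ (vnorm_nonneg _) (by positivity) two_ne_zero |>.1 hsq

lemma card_le_of_mem_Icc {T : ℕ → Finset (Fin m)} {l J : ℕ}
    (hCard : ∀ j, 1 ≤ j → j < J → (T j).card = l) (hCardLast : (T J).card ≤ l) :
    ∀ j ∈ Finset.Icc 1 J, (T j).card ≤ l := by
  intro j hj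
  obtain ⟨h1, hJ⟩ := Finset.mem_Icc.1 hj
  rcases hJ.lt_or_eq with hlt | rfl
  · exact (hCard j h1 hlt).le
  · exact hCardLast

/-- Since the blocks are sorted by decreasing magnitude, each block after the first is bounded in
`ℓ²` by the `ℓ¹` norm of its predecessor. -/
lemma sum_vnorm_restr_le_vnorm1_restr_biUnion_div_sqrt {T : ℕ → Finset (Fin m)} {l J : ℕ}
    (hl : 0 < l) {v : Fin m → ℝ}
    (hDisj : ∀ i ∈ Finset.Icc 1 J, ∀ j ∈ Finset.Icc 1 J, i ≠ j → Disjoint (T i) (T j))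
    (hCard : ∀ j, 1 ≤ j → j < J → (T j).card = l) (hCardLast : (T J).card ≤ l)
    (hOrder : ∀ j, 2 ≤ j → j ≤ J → ∀ a ∈ T j, ∀ b ∈ T (j - 1), |v a| ≤ |v b|) :
    ∑ j ∈ Finset.Icc 2 J, vnorm (restr (T j) v) ≤
      vnorm1 (restr ((Finset.Icc 1 J).biUnion T) v) / Real.sqrt l := by
  have hstep : ∀ j ∈ Finset.Icc 2 J,
      vnorm (restr (T j) v) ≤ vnorm1 (restr (T (j - 1)) v) / Real.sqrt l := by
    intro j hj
    obtain ⟨h2, hJ⟩ := Finset.mem_Icc.1 hj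
    exact vnorm_restr_le_vnorm1_restr_div_sqrt hl (hCard _ (by omega) (by omega))
      (card_le_of_mem_Icc hCard hCardLast j (Finset.mem_Icc.2 ⟨by omega, hJ⟩)) (hOrder j h2 hJ)
  have hshift : ∑ j ∈ Finset.Icc 2 J, vnorm1 (restr (T (j - 1)) v) ≤
      ∑ j ∈ Finset.Icc 1 J, vnorm1 (restr (T j) v) := by
    rw [← Finset.sum_image (f := fun j ↦ vnorm1 (restr (T j) v)) (g := (· - 1)) fun a ha b hb h ↦ by
      simp only [Finset.coe_Icc, Set.mem_Icc] at ha hb; simp only at h; omega]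
    refine Finset.sum_le_sum_of_subset_of_nonneg (fun j hj ↦ ?_) fun j _ _ ↦ ?_
    · obtain ⟨i, hi, rfl⟩ := Finset.mem_image.1 hj
      simp only [Finset.mem_Icc] at hi ⊢; omega
    · rw [vnorm1_restr]; positivity
  have hunion : ∑ j ∈ Finset.Icc 1 J, vnorm1 (restr (T j) v) =
      vnorm1 (restr ((Finset.Icc 1 J).biUnion T) v) := by
    simp only [vnorm1_restr]
    exact (Finset.sum_biUnion hDisj).symm
  calc ∑ j ∈ Finset.Icc 2 J, vnorm (restr (T j) v)
      ≤ ∑ j ∈ Finset.Icc 2 J, vnorm1 (restr (T (j - 1)) v) / Real.sqrt l :=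
        Finset.sum_le_sum hstep
    _ ≤ vnorm1 (restr ((Finset.Icc 1 J).biUnion T) v) / Real.sqrt l := by
        rw [← Finset.sum_div, ← hunion]
        gcongr

end Blocks

section DictionaryLasso

variable {n q r : ℕ} {A : Matrix (Fin n) (Fin q) ℝ} (B : Matrix (Fin n) (Fin r) ℝ)

/-- Minimizing out the free coefficients `α` leaves the objective with `A α + B β - c` replaced by
its projection `P_A (B β - c)` onto the orthogonal complement of the range of `A`. -/
lemma projected_objective_le (hA : IsUnit (Aᵀ * A).det) (c : Fin n → ℝ)
    (pen : (Fin r → ℝ) → ℝ) {α₀ : Fin q → ℝ} {β₀ : Fin r → ℝ}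
    (hmin : ∀ α β, (1 / 2) * vnorm (A *ᵥ α₀ + B *ᵥ β₀ - c) ^ 2 + pen β₀ ≤
      (1 / 2) * vnorm (A *ᵥ α + B *ᵥ β - c) ^ 2 + pen β) (β : Fin r → ℝ) :
    (1 / 2) * vnorm (((1 - A * (Aᵀ * A)⁻¹ * Aᵀ) * B) *ᵥ β₀ -
        (1 - A * (Aᵀ * A)⁻¹ * Aᵀ) *ᵥ c) ^ 2 + pen β₀ ≤
      (1 / 2) * vnorm (((1 - A * (Aᵀ * A)⁻¹ * Aᵀ) * B) *ᵥ β -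
        (1 - A * (Aᵀ * A)⁻¹ * Aᵀ) *ᵥ c) ^ 2 + pen β := by
  set P := 1 - A * (Aᵀ * A)⁻¹ * Aᵀ with hP
  simp only [← mulVec_mulVec, ← mulVec_sub]
  have hPA : P *ᵥ (A *ᵥ α₀) = 0 := by
    rw [mulVec_mulVec, one_sub_mul_inv_mul_transpose_mul hA, zero_mulVec]
  have hle : vnorm (P *ᵥ (B *ᵥ β₀ - c)) ≤ vnorm (A *ᵥ α₀ + B *ᵥ β₀ - c) := by
    rw [show P *ᵥ (B *ᵥ β₀ - c) = P *ᵥ (A *ᵥ α₀ + B *ᵥ β₀ - c) by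
      rw [add_sub_assoc, mulVec_add, hPA, zero_add]]
    exact vnorm_mulVec_le_of_isSymm ((isSymm_one).sub (isSymm_mul_inv_mul_transpose A))
      (isIdempotentElem_mul_inv_mul_transpose hA).one_sub _
  have hopt : A *ᵥ (((Aᵀ * A)⁻¹ * Aᵀ) *ᵥ (c - B *ᵥ β)) + B *ᵥ β - c = P *ᵥ (B *ᵥ β - c) := by
    rw [mulVec_mulVec, hP, sub_mulVec, one_mulVec, ← Matrix.mul_assoc, mulVec_sub, mulVec_sub]
    abel
  have := hmin (((Aᵀ * A)⁻¹ * Aᵀ) *ᵥ (c - B *ᵥ β)) β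
  rw [hopt] at this
  nlinarith [pow_le_pow_left₀ (vnorm_nonneg _) hle 2]

lemma sub_eq_inv_mul_transpose_mulVec_sub (hA : IsUnit (Aᵀ * A).det) (c : Fin n → ℝ)
    (pen : (Fin r → ℝ) → ℝ) {α₀ α : Fin q → ℝ} {β₀ β : Fin r → ℝ} {ε : Fin n → ℝ}
    (hc : c = A *ᵥ α + B *ᵥ β + ε)
    (hmin : ∀ α β, (1 / 2) * vnorm (A *ᵥ α₀ + B *ᵥ β₀ - c) ^ 2 + pen β₀ ≤
      (1 / 2) * vnorm (A *ᵥ α + B *ᵥ β - c) ^ 2 + pen β) :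
    α₀ - α = ((Aᵀ * A)⁻¹ * Aᵀ) *ᵥ ε - ((Aᵀ * A)⁻¹ * Aᵀ) *ᵥ (B *ᵥ (β₀ - β)) := by
  have hα₀ : α₀ = ((Aᵀ * A)⁻¹ * Aᵀ) *ᵥ (c - B *ᵥ β₀) := by
    refine eq_inv_mul_transpose_mulVec_of_forall_vnorm_le hA fun α' ↦ ?_
    have := hmin α' β₀
    rw [← sub_add, sub_add_eq_add_sub, ← sub_add, sub_add_eq_add_sub]
    nlinarith [vnorm_nonneg (A *ᵥ α₀ + B *ᵥ β₀ - c), vnorm_nonneg (A *ᵥ α' + B *ᵥ β₀ - c)]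
  rw [hα₀, hc, show A *ᵥ α + B *ᵥ β + ε - B *ᵥ β₀ = A *ᵥ α + (ε - B *ᵥ (β₀ - β)) by
      rw [mulVec_sub]; abel, mulVec_add, mulVec_mulVec, inv_mul_transpose_mul_self hA,
    one_mulVec, mulVec_sub]
  abel

lemma transpose_mulVec_residual_eq (hA : IsUnit (Aᵀ * A).det) (α : Fin q → ℝ) (β : Fin r → ℝ)
    (ε : Fin n → ℝ) :
    ((1 - A * (Aᵀ * A)⁻¹ * Aᵀ) * B)ᵀ *ᵥ (((1 - A * (Aᵀ * A)⁻¹ * Aᵀ) * B) *ᵥ β -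
        (1 - A * (Aᵀ * A)⁻¹ * Aᵀ) *ᵥ (A *ᵥ α + B *ᵥ β + ε)) =
      -(((1 - A * (Aᵀ * A)⁻¹ * Aᵀ) * B)ᵀ *ᵥ ε) := by
  set P := 1 - A * (Aᵀ * A)⁻¹ * Aᵀ
  have hsymm : Pᵀ = P := ((isSymm_one).sub (isSymm_mul_inv_mul_transpose A)).eq
  have hidem : P * P = P := (isIdempotentElem_mul_inv_mul_transpose hA).one_sub.eq
  rw [← mulVec_mulVec, ← mulVec_sub, show B *ᵥ β - (A *ᵥ α + B *ᵥ β + ε) = -(A *ᵥ α) - ε by abel,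
    mulVec_sub, mulVec_neg, mulVec_mulVec, one_sub_mul_inv_mul_transpose_mul hA, zero_mulVec,
    neg_zero, zero_sub, mulVec_neg, mulVec_mulVec, transpose_mul, hsymm, Matrix.mul_assoc,
    hidem]

lemma vnorm_inv_mul_transpose_mulVec_le_rho (hA : IsUnit (Aᵀ * A).det) {m : ℕ}
    {Y : Matrix (Fin r) (Fin m) ℝ} {k : ℕ} {w : Fin r → ℝ} (hw : w ∈ sparseCone Y k) :
    vnorm (((Aᵀ * A)⁻¹ * Aᵀ) *ᵥ (B *ᵥ w)) ≤ (1 / 2) * (sigmaMin (Aᵀ * A))⁻¹ *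
      (rhoPlus (hcat A B) Y k - rhoMinus (hcat A B) Y k) * vnorm w := by
  rw [← mulVec_mulVec]
  calc _ ≤ (sigmaMin (Aᵀ * A))⁻¹ * vnorm (Aᵀ *ᵥ (B *ᵥ w)) := vnorm_inv_mulVec_le hA _
    _ ≤ (sigmaMin (Aᵀ * A))⁻¹ *
          ((1 / 2) * (rhoPlus (hcat A B) Y k - rhoMinus (hcat A B) Y k) * vnorm w) := by
        gcongr
        · exact inv_nonneg.2 (sigmaMin_nonneg _)
        · exact vnorm_transpose_mulVec_le_rho hw
    _ = _ := by ring

lemma vnorm_inv_mul_transpose_mulVec_le_of_split (hA : IsUnit (Aᵀ * A).det) {m : ℕ}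
    {Z : Matrix (Fin m) (Fin r) ℝ} (hZ : IsUnit (Zᵀ * Z).det) {h : Fin r → ℝ}
    {S : Finset (Fin m)} {T : ℕ → Finset (Fin m)} {K : Finset ℕ} {k l : ℕ}
    (hsplit : Z *ᵥ h = restr S (Z *ᵥ h) + ∑ j ∈ K, restr (T j) (Z *ᵥ h))
    (hS : S.card ≤ k) (hT : ∀ j ∈ K, (T j).card ≤ l) {C : ℝ}
    (htail : ∑ j ∈ K, vnorm (restr (T j) (Z *ᵥ h)) ≤ C) :
    vnorm (((Aᵀ * A)⁻¹ * Aᵀ) *ᵥ (B *ᵥ h)) ≤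
      (1 / 2) * (sigmaMin (Aᵀ * A))⁻¹ * (rhoPlus (hcat A B) ((Zᵀ * Z)⁻¹ * Zᵀ) k -
        rhoMinus (hcat A B) ((Zᵀ * Z)⁻¹ * Zᵀ) k) *
          vnorm (((Zᵀ * Z)⁻¹ * Zᵀ) *ᵥ restr S (Z *ᵥ h)) +
      (1 / 2) * (sigmaMin (Aᵀ * A))⁻¹ * (rhoPlus (hcat A B) ((Zᵀ * Z)⁻¹ * Zᵀ) l -
        rhoMinus (hcat A B) ((Zᵀ * Z)⁻¹ * Zᵀ) l) * (sigmaMin Z)⁻¹ * C := by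
  set Zp := (Zᵀ * Z)⁻¹ * Zᵀ
  set M := (Aᵀ * A)⁻¹ * Aᵀ
  set cl := (1 / 2) * (sigmaMin (Aᵀ * A))⁻¹ * (rhoPlus (hcat A B) Zp l - rhoMinus (hcat A B) Zp l)
  have hcl : 0 ≤ cl := by
    have := rhoMinus_le_rhoPlus (hcat A B) Zp l
    have := sigmaMin_nonneg (Aᵀ * A)
    positivity
  have hh : h = Zp *ᵥ restr S (Z *ᵥ h) + ∑ j ∈ K, Zp *ᵥ restr (T j) (Z *ᵥ h) := by
    rw [← mulVec_sum, ← mulVec_add, ← hsplit, mulVec_mulVec, inv_mul_transpose_mul_self hZ,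
      one_mulVec]
  have hblock : ∀ j ∈ K, vnorm (M *ᵥ (B *ᵥ (Zp *ᵥ restr (T j) (Z *ᵥ h)))) ≤
      cl * (sigmaMin Z)⁻¹ * vnorm (restr (T j) (Z *ᵥ h)) := fun j hj ↦ calc
    _ ≤ cl * vnorm (Zp *ᵥ restr (T j) (Z *ᵥ h)) :=
        vnorm_inv_mul_transpose_mulVec_le_rho B hA (mulVec_restr_mem_sparseCone Zp (hT j hj) _)
    _ ≤ cl * ((sigmaMin Z)⁻¹ * vnorm (restr (T j) (Z *ᵥ h))) :=
        mul_le_mul_of_nonneg_left (vnorm_pinv_mulVec_le hZ _) hcl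
    _ = _ := by ring
  conv_lhs => rw [hh, mulVec_add, mulVec_sum, mulVec_add, mulVec_sum]
  refine (vnorm_add_le _ _).trans (add_le_add
    (vnorm_inv_mul_transpose_mulVec_le_rho B hA (mulVec_restr_mem_sparseCone Zp hS _)) ?_)
  calc _ ≤ ∑ j ∈ K, cl * (sigmaMin Z)⁻¹ * vnorm (restr (T j) (Z *ᵥ h)) :=
        (vnorm_sum_le _ _).trans (Finset.sum_le_sum hblock)
    _ ≤ cl * (sigmaMin Z)⁻¹ * C := by
        rw [← Finset.mul_sum]
        exact mul_le_mul_of_nonneg_left htail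
          (mul_nonneg hcl (inv_nonneg.2 (sigmaMin_nonneg Z)))

end DictionaryLasso

theorem statement5_general {n p r m : ℕ}
    (A : Matrix (Fin n) (Fin (p - r)) ℝ) (hAinv : IsUnit (Aᵀ * A).det)
    (B : Matrix (Fin n) (Fin r) ℝ)
    (Z : Matrix (Fin m) (Fin r) ℝ) (hZrank : Z.rank = r)
    (Zp : Matrix (Fin r) (Fin m) ℝ) (hZp : Zp = (Zᵀ * Z)⁻¹ * Zᵀ)
    (αstar : Fin (p - r) → ℝ) (βstar : Fin r → ℝ) (εv : Fin n → ℝ)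
    (cvec : Fin n → ℝ) (hc : cvec = A.mulVec αstar + B.mulVec βstar + εv)
    (PA : Matrix (Fin n) (Fin n) ℝ) (hPA : PA = 1 - A * (Aᵀ * A)⁻¹ * Aᵀ)
    (X : Matrix (Fin n) (Fin r) ℝ) (hX : X = PA * B)
    (lam : ℝ) (hlam : 0 < lam)
    (αhat : Fin (p - r) → ℝ) (βhat : Fin r → ℝ)
    (hmin : ∀ (α : Fin (p - r) → ℝ) (β : Fin r → ℝ),
      (1 / 2) * vnorm (A.mulVec αhat + B.mulVec βhat - cvec) ^ 2 +
          lam * vnorm1 (Z.mulVec βhat) ≤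
        (1 / 2) * vnorm (A.mulVec α + B.mulVec β - cvec) ^ 2 +
          lam * vnorm1 (Z.mulVec β))
    (h : Fin r → ℝ) (hh : h = βhat - βstar)
    (d : Fin (p - r) → ℝ) (hd : d = αhat - αstar)
    (T₀ : Finset (Fin m)) (hT₀ : T₀ = suppSet (Z.mulVec βstar))
    (s : ℕ) (hs : s = T₀.card)
    (hfeas : vnormInf (Zpᵀ.mulVec (Xᵀ.mulVec εv)) < lam / 2)
    -- the block partition of `T₀ᶜ` into `T 1, …, T J`
    (l : ℕ) (hl : 0 < l) (J : ℕ) (hJ : 1 ≤ J) (T : ℕ → Finset (Fin m))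
    (hUnion : (Finset.Icc 1 J).biUnion T = T₀ᶜ)
    (hDisj : ∀ i ∈ Finset.Icc 1 J, ∀ j ∈ Finset.Icc 1 J, i ≠ j → Disjoint (T i) (T j))
    (hCard : ∀ j, 1 ≤ j → j < J → (T j).card = l)
    (hCardLast : (T J).card ≤ l)
    (hOrder : ∀ j, 2 ≤ j → j ≤ J → ∀ a ∈ T j, ∀ b ∈ T (j - 1),
      |Z.mulVec h a| ≤ |Z.mulVec h b|)
    (T01 : Finset (Fin m)) (hT01 : T01 = T₀ ∪ T 1)
    (Wd1 Wd2 : ℝ)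
    (hWd1 : Wd1 = (1 / 2) * (sigmaMin (Aᵀ * A))⁻¹ *
      (rhoPlus (hcat A B) Zp (s + l) - rhoMinus (hcat A B) Zp (s + l)))
    (hWd2 : Wd2 = (3 / 2) * (sigmaMin (Aᵀ * A))⁻¹ * (sigmaMin Z)⁻¹ *
      Real.sqrt ((s : ℝ) / (l : ℝ)) *
      (rhoPlus (hcat A B) Zp l - rhoMinus (hcat A B) Zp l)) :
    vnorm d ≤ Wd1 * vnorm (Zp.mulVec (restr T01 (Z.mulVec h))) +
        Wd2 * vnorm (restr T₀ (Z.mulVec h)) +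
        vnorm (((Aᵀ * A)⁻¹ * Aᵀ).mulVec εv) := by
  subst hd hWd1 hWd2 hT01 hZp hX hPA hc
  have hZ := isUnit_det_transpose_mul_self_of_rank_eq hZrank
  have hcone := vnorm1_restr_compl_le_three_mul (inv_mul_transpose_mul_self hZ) hlam
    (projected_objective_le B hAinv _ (fun β ↦ lam * vnorm1 (Z *ᵥ β)) hmin βstar)
    (by rw [transpose_mulVec_residual_eq B hAinv αstar βstar εv, mulVec_neg, vnormInf_neg]
        exact hfeas.le)
  rw [← hh, ← hT₀] at hcone
  have htail : ∑ j ∈ Finset.Icc 2 J, vnorm (restr (T j) (Z *ᵥ h)) ≤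
      3 * Real.sqrt ((s : ℝ) / l) * vnorm (restr T₀ (Z *ᵥ h)) := calc
    _ ≤ vnorm1 (restr T₀ᶜ (Z *ᵥ h)) / Real.sqrt l :=
        hUnion ▸ sum_vnorm_restr_le_vnorm1_restr_biUnion_div_sqrt hl hDisj hCard hCardLast hOrder
    _ ≤ 3 * (Real.sqrt s * vnorm (restr T₀ (Z *ᵥ h))) / Real.sqrt l := by
        gcongr
        exact hcone.trans (by rw [hs]; gcongr; exact vnorm1_restr_le_sqrt_card_mul_vnorm _ _)
    _ = _ := by rw [Real.sqrt_div' _ (Nat.cast_nonneg l)]; ring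
  have hsplit := eq_restr_union_add_sum_restr hJ hUnion hDisj (Z *ᵥ h)
  have hfree := vnorm_inv_mul_transpose_mulVec_le_of_split B hAinv hZ hsplit
    ((Finset.card_union_le _ _).trans (add_le_add hs.ge (card_le_of_mem_Icc hCard hCardLast 1
      (Finset.mem_Icc.2 ⟨le_rfl, hJ⟩))))
    (fun j hj ↦ card_le_of_mem_Icc hCard hCardLast j (Finset.Icc_subset_Icc_left one_le_two hj))
    htail
  rw [sub_eq_inv_mul_transpose_mulVec_sub B hAinv _ (fun β ↦ lam * vnorm1 (Z *ᵥ β)) rfl hmin, ← hh]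
  calc _ ≤ vnorm (((Aᵀ * A)⁻¹ * Aᵀ) *ᵥ εv) + vnorm (((Aᵀ * A)⁻¹ * Aᵀ) *ᵥ (B *ᵥ h)) :=
        vnorm_sub_le _ _
    _ ≤ _ := by linarith

/-- In the full dictionary-LASSO setting with the block partition, the
free-part error satisfies
`‖d‖ ≤ W_{d,1}‖Z⁺(Zh)_{T₀₁}‖ + W_{d,2}‖(Zh)_{T₀}‖ + ‖(AᵀA)⁻¹Aᵀε‖`. -/
theorem statement5 {n p r m : ℕ} (hn : 0 < n) (hp : 0 < p) (hr : 0 < r) (hm : 0 < m)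
    (hrp : r ≤ p)
    (A : Matrix (Fin n) (Fin (p - r)) ℝ) (hAinv : IsUnit (Aᵀ * A).det)
    (B : Matrix (Fin n) (Fin r) ℝ)
    (Z : Matrix (Fin m) (Fin r) ℝ) (hZrank : Z.rank = r)
    (Zp : Matrix (Fin r) (Fin m) ℝ) (hZp : Zp = (Zᵀ * Z)⁻¹ * Zᵀ)
    (αstar : Fin (p - r) → ℝ) (βstar : Fin r → ℝ) (εv : Fin n → ℝ)
    (cvec : Fin n → ℝ) (hc : cvec = A.mulVec αstar + B.mulVec βstar + εv)
    (PA : Matrix (Fin n) (Fin n) ℝ) (hPA : PA = 1 - A * (Aᵀ * A)⁻¹ * Aᵀ)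
    (X : Matrix (Fin n) (Fin r) ℝ) (hX : X = PA * B)
    (y : Fin n → ℝ) (hy : y = PA.mulVec cvec)
    (lam : ℝ) (hlam : 0 < lam)
    (αhat : Fin (p - r) → ℝ) (βhat : Fin r → ℝ)
    (hmin : ∀ (α : Fin (p - r) → ℝ) (β : Fin r → ℝ),
      (1 / 2) * vnorm (A.mulVec αhat + B.mulVec βhat - cvec) ^ 2 +
          lam * vnorm1 (Z.mulVec βhat) ≤
        (1 / 2) * vnorm (A.mulVec α + B.mulVec β - cvec) ^ 2 +
          lam * vnorm1 (Z.mulVec β))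
    (h : Fin r → ℝ) (hh : h = βhat - βstar)
    (d : Fin (p - r) → ℝ) (hd : d = αhat - αstar)
    (T₀ : Finset (Fin m)) (hT₀ : T₀ = suppSet (Z.mulVec βstar))
    (s : ℕ) (hs : s = T₀.card) (hs1 : 1 ≤ s)
    (hfeas : vnormInf (Zpᵀ.mulVec (Xᵀ.mulVec εv)) < lam / 2)
    -- the block partition of `T₀ᶜ` into `T 1, …, T J`
    (l : ℕ) (hl : 0 < l) (J : ℕ) (hJ : 1 ≤ J) (T : ℕ → Finset (Fin m))
    (hUnion : (Finset.Icc 1 J).biUnion T = T₀ᶜ)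
    (hDisj : ∀ i ∈ Finset.Icc 1 J, ∀ j ∈ Finset.Icc 1 J, i ≠ j → Disjoint (T i) (T j))
    (hCard : ∀ j, 1 ≤ j → j < J → (T j).card = l)
    (hCardLast : (T J).card ≤ l)
    (hOrder : ∀ j, 2 ≤ j → j ≤ J → ∀ a ∈ T j, ∀ b ∈ T (j - 1),
      |Z.mulVec h a| ≤ |Z.mulVec h b|)
    (T01 : Finset (Fin m)) (hT01 : T01 = T₀ ∪ T 1)
    (Wd1 Wd2 : ℝ)
    (hWd1 : Wd1 = (1 / 2) * (sigmaMin (Aᵀ * A))⁻¹ *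
      (rhoPlus (hcat A B) Zp (s + l) - rhoMinus (hcat A B) Zp (s + l)))
    (hWd2 : Wd2 = (3 / 2) * (sigmaMin (Aᵀ * A))⁻¹ * (sigmaMin Z)⁻¹ *
      Real.sqrt ((s : ℝ) / (l : ℝ)) *
      (rhoPlus (hcat A B) Zp l - rhoMinus (hcat A B) Zp l)) :
    vnorm d ≤ Wd1 * vnorm (Zp.mulVec (restr T01 (Z.mulVec h))) +
        Wd2 * vnorm (restr T₀ (Z.mulVec h)) +
        vnorm (((Aᵀ * A)⁻¹ * Aᵀ).mulVec εv) :=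
  statement5_general A hAinv B Z hZrank Zp hZp αstar βstar εv cvec hc PA hPA X hX lam hlam αhat βhat
    hmin h hh d hd T₀ hT₀ s hs hfeas l hl J hJ T hUnion hDisj hCard hCardLast hOrder T01 hT01 Wd1
    Wd2 hWd1 hWd2
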